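/- Let ℓ, ℓ' be natural numbers and n an integer with n ≤ −2 and ℓ + ℓ' + n + 1 > 0, and fix r' > 0. Then the function I(r) = ∫₀^∞ k^n j_ℓ(kr) j_{ℓ'}(kr') dk is twice differentiable on (0, ∞), and for every r > 0, −[I''(r) + (2/r)·I'(r) − (ℓ(ℓ+1)/r²)·I(r)] = ∫₀^∞ k^{n+2} j_ℓ(kr) j_{ℓ'}(kr') dk. That is, applying the operator D̂_{ℓ,r} = −[∂²/∂r² + (2/r)∂/∂r − ℓ(ℓ+1)/r²] to the double spherical-Bessel overlap integral raises the power-law weight by two. -/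

import Mathlib

open Real

/-- Rayleigh's formula: `sphericalBessel ℓ x = (-x)^ℓ · ((1/x) d/dx)^ℓ (sin x / x)`,
the spherical Bessel function of the first kind of order `ℓ`. -/
noncomputable def sphericalBessel (ℓ : ℕ) (x : ℝ) : ℝ :=
  (-x) ^ ℓ * ((fun f : ℝ → ℝ => fun y => deriv f y / y)^[ℓ] (fun y => Real.sin y / y)) x

open MeasureTheory Set Filter Topology

/-!
Poisson's integral `j_ℓ(x) = x^ℓ / (2^ℓ ℓ!) ∫₀¹ (1 - t²)^ℓ cos (x t) dt` gives `|j_ℓ(x)| ≤ x^ℓ`,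
and the three-term recurrence gives `|j_ℓ(x)| ≤ C / x`. Together they dominate
`k^p j_ℓ(k r) j_{ℓ'}(k r')` by `C (1 + k²)⁻¹`, locally uniformly in `r`, whenever
`p ≤ 0 ≤ p + ℓ + ℓ'`. So `I_{ℓ,p}(r) = ∫₀^∞ k^p j_ℓ(k r) j_{ℓ'}(k r') dk` may be differentiated
under the integral sign, and the relations `j_ℓ' = (ℓ/x) j_ℓ - j_{ℓ+1}` and
`j_{ℓ+1}' = j_ℓ - ((ℓ+2)/x) j_{ℓ+1}` become
`I_{ℓ,n}' = (ℓ/r) I_{ℓ,n} - I_{ℓ+1,n+1}` and `I_{ℓ+1,n+1}' = I_{ℓ,n+2} - ((ℓ+2)/r) I_{ℓ+1,n+1}`.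
Substituting the second into the derivative of the first, the operator applied to `I_{ℓ,n}`
collapses to `-I_{ℓ,n+2}`.
-/

lemma natCast_mul_pow_sub_one (ℓ : ℕ) {x : ℝ} (hx : x ≠ 0) :
    (ℓ : ℝ) * x ^ (ℓ - 1) = ℓ / x * x ^ ℓ := by
  rcases Nat.eq_zero_or_pos ℓ with rfl | hℓ
  · simp
  · rw [← pow_sub_one_mul hℓ.ne']
    field_simp

lemma hasDerivAt_intervalIntegral_mul_comp_mul {φ c c' : ℝ → ℝ} (hφ : Continuous φ)
    (hc' : Continuous c') (hderiv : ∀ y, HasDerivAt c (c' y) y) (hbound : ∀ y, |c' y| ≤ 1)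
    (x : ℝ) :
    HasDerivAt (fun x => ∫ t in (0 : ℝ)..1, φ t * c (x * t))
      (∫ t in (0 : ℝ)..1, φ t * t * c' (x * t)) x := by
  have hc : Continuous c := continuous_iff_continuousAt.2 fun y => (hderiv y).continuousAt
  obtain ⟨B, hB⟩ := isCompact_Icc.exists_bound_of_continuousOn (hφ.continuousOn (s := Icc 0 1))
  refine (intervalIntegral.hasDerivAt_integral_of_dominated_loc_of_deriv_le (bound := fun _ => B)
    (F := fun x t => φ t * c (x * t)) (F' := fun x t => φ t * t * c' (x * t))
    univ_mem (.of_forall fun y => (by fun_prop : Continuous _).aestronglyMeasurable)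
    ((by fun_prop : Continuous _).intervalIntegrable _ _)
    (by fun_prop : Continuous _).aestronglyMeasurable ?_ intervalIntegrable_const ?_).2
  · refine .of_forall fun t ht y _ => ?_
    rw [uIoc_of_le zero_le_one] at ht
    have hφt : |φ t| ≤ B := hB t (Ioc_subset_Icc_self ht)
    have ht1 : |t| ≤ 1 := abs_le.2 ⟨by linarith [ht.1], ht.2⟩
    calc ‖φ t * t * c' (y * t)‖ = |φ t| * |t| * |c' (y * t)| := by
          rw [Real.norm_eq_abs, abs_mul, abs_mul]
      _ ≤ B * 1 * 1 := by
          have hB0 : 0 ≤ B := (abs_nonneg _).trans hφt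
          gcongr
          exact hbound _
      _ = B := by ring
  · refine .of_forall fun t _ y _ => ?_
    exact (((hderiv (y * t)).comp y ((hasDerivAt_id y).mul_const t)).const_mul (φ t)).congr_deriv
      (by simp only [one_mul]; ring)

noncomputable def poissonCos (ℓ : ℕ) (x : ℝ) : ℝ :=
  ∫ t in (0 : ℝ)..1, (1 - t ^ 2) ^ ℓ * cos (x * t)

noncomputable def poissonSin (ℓ : ℕ) (x : ℝ) : ℝ :=
  ∫ t in (0 : ℝ)..1, t * (1 - t ^ 2) ^ ℓ * sin (x * t)

lemma poissonCos_zero {x : ℝ} (hx : x ≠ 0) : poissonCos 0 x = sin x / x := by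
  simp only [poissonCos, pow_zero, one_mul]
  rw [intervalIntegral.integral_comp_mul_left (fun y => cos y) hx]
  simp [integral_cos, div_eq_inv_mul]

section Poisson

variable (ℓ : ℕ) (x : ℝ)

lemma hasDerivAt_poissonCos : HasDerivAt (poissonCos ℓ) (-poissonSin ℓ x) x := by
  refine (hasDerivAt_intervalIntegral_mul_comp_mul (by fun_prop) continuous_sin.neg
    hasDerivAt_cos (fun y => by simpa using abs_sin_le_one y) x).congr_deriv ?_
  rw [poissonSin, ← intervalIntegral.integral_neg]
  congr 1; ext t; simp only [Pi.neg_apply]; ring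

lemma hasDerivAt_poissonSin :
    HasDerivAt (poissonSin ℓ) (poissonCos ℓ x - poissonCos (ℓ + 1) x) x := by
  refine (hasDerivAt_intervalIntegral_mul_comp_mul (by fun_prop) continuous_cos
    hasDerivAt_sin abs_cos_le_one x).congr_deriv ?_
  rw [poissonCos, poissonCos, ← intervalIntegral.integral_sub
    ((by fun_prop : Continuous _).intervalIntegrable _ _)
    ((by fun_prop : Continuous _).intervalIntegrable _ _)]
  congr 1; ext t; ring

lemma abs_poissonCos_le_one : |poissonCos ℓ x| ≤ 1 := by
  have h := intervalIntegral.norm_integral_le_of_norm_le_const (C := 1) (a := 0) (b := 1)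
    (f := fun t => (1 - t ^ 2) ^ ℓ * cos (x * t)) fun t ht => by
      rw [uIoc_of_le zero_le_one] at ht
      rw [Real.norm_eq_abs, abs_mul, ← one_mul 1]
      refine mul_le_mul ?_ (abs_cos_le_one _) (abs_nonneg _) zero_le_one
      rw [abs_pow]
      exact pow_le_one₀ (abs_nonneg _) (abs_le.2 ⟨by nlinarith [ht.1, ht.2], by nlinarith [ht.1]⟩)
  simpa [poissonCos] using h

/-- Integration by parts against `t (1 - t²)^ℓ = -d/dt [(1 - t²)^(ℓ+1) / (2(ℓ+1))]`. -/
lemma mul_poissonCos_succ : x * poissonCos (ℓ + 1) x = 2 * (ℓ + 1) * poissonSin ℓ x := by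
  have hℓ : (ℓ : ℝ) + 1 ≠ 0 := by positivity
  have hv : ∀ t ∈ uIcc (0 : ℝ) 1,
      HasDerivAt (fun t : ℝ => -((1 - t ^ 2) ^ (ℓ + 1) / (2 * ((ℓ : ℝ) + 1))))
        (t * (1 - t ^ 2) ^ ℓ) t := fun t _ => by
    refine ((((hasDerivAt_pow 2 t).const_sub 1).pow (ℓ + 1)).div_const _).neg.congr_deriv ?_
    push_cast
    field_simp
  have hu : ∀ t ∈ uIcc (0 : ℝ) 1, HasDerivAt (fun t => sin (x * t)) (x * cos (x * t)) t :=
    fun t _ => ((hasDerivAt_sin _).comp t ((hasDerivAt_id t).const_mul x)).congr_deriv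
      (by simp [mul_comm])
  have ibp := intervalIntegral.integral_mul_deriv_eq_deriv_mul hu hv
    ((by fun_prop : Continuous fun t => x * cos (x * t)).intervalIntegrable _ _)
    ((by fun_prop : Continuous fun t : ℝ => t * (1 - t ^ 2) ^ ℓ).intervalIntegrable _ _)
  have hsin : (fun t => sin (x * t) * (t * (1 - t ^ 2) ^ ℓ)) =
      fun t => t * (1 - t ^ 2) ^ ℓ * sin (x * t) := by ext; ring
  have hcos : (fun t => x * cos (x * t) * -((1 - t ^ 2) ^ (ℓ + 1) / (2 * ((ℓ : ℝ) + 1)))) =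
      fun t => -(x / (2 * (ℓ + 1))) * ((1 - t ^ 2) ^ (ℓ + 1) * cos (x * t)) := by ext; ring
  simp only [hsin, hcos, intervalIntegral.integral_const_mul, one_pow, sub_self, mul_zero,
    sin_zero, zero_pow (Nat.succ_ne_zero ℓ), zero_div, neg_zero, zero_mul] at ibp
  rw [poissonSin, ibp, poissonCos]
  field_simp
  ring

end Poisson

noncomputable def sphericalBesselPoisson (ℓ : ℕ) (x : ℝ) : ℝ :=
  x ^ ℓ / (2 ^ ℓ * ℓ.factorial) * poissonCos ℓ x

section SphericalBesselPoisson

variable (ℓ : ℕ)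

lemma sphericalBesselPoisson_succ (x : ℝ) :
    sphericalBesselPoisson (ℓ + 1) x = x ^ ℓ / (2 ^ ℓ * ℓ.factorial) * poissonSin ℓ x := by
  have h := mul_poissonCos_succ ℓ x
  simp only [sphericalBesselPoisson, Nat.factorial_succ, pow_succ]
  push_cast
  field_simp
  linear_combination (x ^ ℓ) * h

lemma hasDerivAt_sphericalBesselPoisson {x : ℝ} (hx : x ≠ 0) :
    HasDerivAt (sphericalBesselPoisson ℓ)
      (ℓ / x * sphericalBesselPoisson ℓ x - sphericalBesselPoisson (ℓ + 1) x) x := by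
  refine (((hasDerivAt_pow ℓ x).div_const _).mul (hasDerivAt_poissonCos ℓ x)).congr_deriv ?_
  rw [sphericalBesselPoisson_succ, sphericalBesselPoisson, natCast_mul_pow_sub_one ℓ hx]
  ring

lemma hasDerivAt_sphericalBesselPoisson_succ {x : ℝ} (hx : x ≠ 0) :
    HasDerivAt (sphericalBesselPoisson (ℓ + 1))
      (sphericalBesselPoisson ℓ x - (ℓ + 2) / x * sphericalBesselPoisson (ℓ + 1) x) x := by
  rw [show sphericalBesselPoisson (ℓ + 1) = _ from funext (sphericalBesselPoisson_succ ℓ)]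
  refine (((hasDerivAt_pow ℓ x).div_const _).mul (hasDerivAt_poissonSin ℓ x)).congr_deriv ?_
  have h := mul_poissonCos_succ ℓ x
  rw [sphericalBesselPoisson, natCast_mul_pow_sub_one ℓ hx]
  field_simp
  linear_combination -h

lemma iterate_deriv_div_sinc_eq_poissonCos {x : ℝ} (hx : 0 < x) :
    (fun f : ℝ → ℝ => fun y => deriv f y / y)^[ℓ] (fun y => sin y / y) x =
      (-1) ^ ℓ / (2 ^ ℓ * ℓ.factorial) * poissonCos ℓ x := by
  induction ℓ generalizing x with
  | zero => simp [poissonCos_zero hx.ne']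
  | succ m ih =>
    have hlocal : (fun f : ℝ → ℝ => fun y => deriv f y / y)^[m] (fun y => sin y / y) =ᶠ[𝓝 x]
        fun y => (-1) ^ m / (2 ^ m * m.factorial) * poissonCos m y :=
      eventually_of_mem (Ioi_mem_nhds hx) fun y hy => ih hy
    rw [Function.iterate_succ_apply', hlocal.deriv_eq,
      ((hasDerivAt_poissonCos m x).const_mul _).deriv]
    have h := mul_poissonCos_succ m x
    rw [Nat.factorial_succ]
    push_cast
    field_simp
    linear_combination (2 ^ m * (-1) ^ m) * h

lemma sphericalBessel_eq_sphericalBesselPoisson {x : ℝ} (hx : 0 < x) :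
    sphericalBessel ℓ x = sphericalBesselPoisson ℓ x := by
  rw [sphericalBessel, iterate_deriv_div_sinc_eq_poissonCos ℓ hx, sphericalBesselPoisson, neg_pow]
  field_simp
  rw [← pow_mul, pow_mul', neg_one_sq, one_pow, one_mul]

lemma eventuallyEq_sphericalBesselPoisson {x : ℝ} (hx : 0 < x) :
    sphericalBessel ℓ =ᶠ[𝓝 x] sphericalBesselPoisson ℓ :=
  eventually_of_mem (Ioi_mem_nhds hx) fun _ hy => sphericalBessel_eq_sphericalBesselPoisson ℓ hy

end SphericalBesselPoisson

section SphericalBessel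

variable (ℓ : ℕ) {x : ℝ}

lemma hasDerivAt_sphericalBessel (hx : 0 < x) :
    HasDerivAt (sphericalBessel ℓ)
      (ℓ / x * sphericalBessel ℓ x - sphericalBessel (ℓ + 1) x) x := by
  rw [sphericalBessel_eq_sphericalBesselPoisson ℓ hx,
    sphericalBessel_eq_sphericalBesselPoisson (ℓ + 1) hx]
  exact (hasDerivAt_sphericalBesselPoisson ℓ hx.ne').congr_of_eventuallyEq
    (eventuallyEq_sphericalBesselPoisson ℓ hx)

lemma hasDerivAt_sphericalBessel_succ (hx : 0 < x) :
    HasDerivAt (sphericalBessel (ℓ + 1))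
      (sphericalBessel ℓ x - (ℓ + 2) / x * sphericalBessel (ℓ + 1) x) x := by
  rw [sphericalBessel_eq_sphericalBesselPoisson ℓ hx,
    sphericalBessel_eq_sphericalBesselPoisson (ℓ + 1) hx]
  exact (hasDerivAt_sphericalBesselPoisson_succ ℓ hx.ne').congr_of_eventuallyEq
    (eventuallyEq_sphericalBesselPoisson (ℓ + 1) hx)

lemma continuousOn_sphericalBessel : ContinuousOn (sphericalBessel ℓ) (Ioi 0) :=
  fun _ hx => (hasDerivAt_sphericalBessel ℓ hx).continuousAt.continuousWithinAt

/-- Compare the two expressions for the derivative of `j_{ℓ+1}`. -/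
lemma sphericalBessel_add_sphericalBessel_add_two (hx : 0 < x) :
    sphericalBessel ℓ x + sphericalBessel (ℓ + 2) x =
      (2 * ℓ + 3) / x * sphericalBessel (ℓ + 1) x := by
  have h := (hasDerivAt_sphericalBessel (ℓ + 1) hx).unique
    (hasDerivAt_sphericalBessel_succ ℓ hx)
  push_cast at h
  field_simp at h ⊢
  linarith

lemma sphericalBessel_zero : sphericalBessel 0 x = sin x / x := by
  simp [sphericalBessel]

lemma sphericalBessel_one (hx : x ≠ 0) : sphericalBessel 1 x = sin x / x ^ 2 - cos x / x := by
  have h : HasDerivAt (fun y => sin y / y) ((cos x * x - sin x * 1) / x ^ 2) x :=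
    (hasDerivAt_sin x).div (hasDerivAt_id x) hx
  simp only [sphericalBessel, Function.iterate_one, pow_one, h.deriv]
  field_simp
  ring

lemma abs_sphericalBessel_le_pow (hx : 0 < x) : |sphericalBessel ℓ x| ≤ x ^ ℓ := by
  rw [sphericalBessel_eq_sphericalBesselPoisson ℓ hx, sphericalBesselPoisson, abs_mul,
    abs_of_nonneg (by positivity)]
  have hc : (1 : ℝ) ≤ 2 ^ ℓ * ℓ.factorial :=
    one_le_mul_of_one_le_of_one_le (one_le_pow₀ one_le_two) (mod_cast ℓ.factorial_pos)
  calc x ^ ℓ / (2 ^ ℓ * ℓ.factorial) * |poissonCos ℓ x|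
      ≤ x ^ ℓ / (2 ^ ℓ * ℓ.factorial) * 1 := by gcongr; exact abs_poissonCos_le_one ℓ x
    _ ≤ x ^ ℓ := by rw [mul_one]; exact div_le_self (by positivity) hc

lemma exists_abs_sphericalBessel_le_div_of_one_le :
    ∀ ℓ : ℕ, ∃ C, ∀ x, 1 ≤ x → |sphericalBessel ℓ x| ≤ C / x
  | 0 => ⟨1, fun x hx => by
      rw [sphericalBessel_zero, abs_div, abs_of_pos (zero_lt_one.trans_le hx)]
      gcongr
      exact abs_sin_le_one x⟩
  | 1 => ⟨2, fun x hx => by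
      have hx0 : 0 < x := zero_lt_one.trans_le hx
      rw [sphericalBessel_one hx0.ne']
      calc |sin x / x ^ 2 - cos x / x| ≤ |sin x| / x ^ 2 + |cos x| / x := by
            refine (abs_sub _ _).trans ?_
            rw [abs_div, abs_div, abs_of_pos hx0, abs_of_pos (pow_pos hx0 2)]
        _ ≤ 1 / x + 1 / x := by
            gcongr
            · exact abs_sin_le_one x
            · exact le_self_pow₀ hx two_ne_zero
            · exact abs_cos_le_one x
        _ = 2 / x := by ring⟩
  | ℓ + 2 => by
      obtain ⟨C₀, hC₀⟩ := exists_abs_sphericalBessel_le_div_of_one_le ℓ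
      obtain ⟨C₁, hC₁⟩ := exists_abs_sphericalBessel_le_div_of_one_le (ℓ + 1)
      refine ⟨(2 * ℓ + 3) * |C₁| + C₀, fun x hx => ?_⟩
      have hx0 : 0 < x := zero_lt_one.trans_le hx
      rw [eq_sub_of_add_eq' (sphericalBessel_add_sphericalBessel_add_two ℓ hx0)]
      calc |(2 * ℓ + 3) / x * sphericalBessel (ℓ + 1) x - sphericalBessel ℓ x|
          ≤ (2 * ℓ + 3) / x * |sphericalBessel (ℓ + 1) x| + |sphericalBessel ℓ x| := by
            refine (abs_sub _ _).trans ?_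
            rw [abs_mul, abs_of_pos (by positivity)]
        _ ≤ (2 * ℓ + 3) * (|C₁| / x) + C₀ / x := by
            gcongr
            · exact div_le_self (by positivity) hx
            · exact (hC₁ x hx).trans (by gcongr; exact le_abs_self C₁)
            · exact hC₀ x hx
        _ = ((2 * ℓ + 3) * |C₁| + C₀) / x := by ring

lemma exists_abs_sphericalBessel_le_mul_pow_and_div :
    ∃ C, ∀ x, 0 < x → |sphericalBessel ℓ x| ≤ C * x ^ ℓ ∧ |sphericalBessel ℓ x| ≤ C / x := by
  obtain ⟨C, hC⟩ := exists_abs_sphericalBessel_le_div_of_one_le ℓ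
  refine ⟨max C 1, fun x hx => ⟨(abs_sphericalBessel_le_pow ℓ hx).trans
    (le_mul_of_one_le_left (by positivity) (le_max_right _ _)), ?_⟩⟩
  rcases le_total x 1 with hx1 | hx1
  · calc |sphericalBessel ℓ x| ≤ x ^ ℓ := abs_sphericalBessel_le_pow ℓ hx
      _ ≤ 1 := pow_le_one₀ hx.le hx1
      _ ≤ 1 / x := one_le_one_div hx hx1
      _ ≤ max C 1 / x := by gcongr; exact le_max_right _ _
  · exact (hC x hx1).trans (by gcongr; exact le_max_left _ _)

end SphericalBessel

lemma abs_zpow_mul_mul_le_inv_one_add_sq {f g : ℝ → ℝ} {m m' : ℕ} {p : ℤ} {C D a b r r' k : ℝ}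
    (hp : p ≤ 0) (hpm : 0 ≤ p + m + m')
    (hf : ∀ x, 0 < x → |f x| ≤ C * x ^ m ∧ |f x| ≤ C / x)
    (hg : ∀ x, 0 < x → |g x| ≤ D * x ^ m' ∧ |g x| ≤ D / x)
    (ha : 0 < a) (har : a ≤ r) (hrb : r ≤ b) (hr' : 0 < r') (hk : 0 < k) :
    |k ^ p * f (k * r) * g (k * r')| ≤
      2 * C * D * (b ^ m * r' ^ m' + (a * r')⁻¹) * (1 + k ^ 2)⁻¹ := by
  have hr : 0 < r := ha.trans_le har
  have hb : 0 < b := hr.trans_le hrb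
  have hC : 0 ≤ C := by simpa using (abs_nonneg _).trans (hf 1 one_pos).2
  have hD : 0 ≤ D := by simpa using (abs_nonneg _).trans (hg 1 one_pos).2
  rw [abs_mul, abs_mul, abs_of_pos (zpow_pos hk p)]
  rcases le_total k 1 with hk1 | hk1
  · have hpow : k ^ p * k ^ m * k ^ m' ≤ 1 := by
      rw [← zpow_natCast, ← zpow_natCast, ← zpow_add₀ hk.ne', ← zpow_add₀ hk.ne']
      exact zpow_le_one₀ hk hk1 hpm
    have hsq : 1 ≤ 2 * (1 + k ^ 2)⁻¹ := by
      rw [← div_eq_mul_inv, le_div_iff₀ (by positivity)]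
      nlinarith
    calc k ^ p * |f (k * r)| * |g (k * r')|
        ≤ k ^ p * (C * (k * r) ^ m) * (D * (k * r') ^ m') := by
          gcongr
          exacts [(hf _ (by positivity)).1, (hg _ (by positivity)).1]
      _ = C * D * r ^ m * r' ^ m' * (k ^ p * k ^ m * k ^ m') := by ring
      _ ≤ C * D * b ^ m * r' ^ m' * 1 := by gcongr
      _ ≤ C * D * (b ^ m * r' ^ m' + (a * r')⁻¹) * (2 * (1 + k ^ 2)⁻¹) := by
          rw [mul_assoc (C * D)]
          gcongr
          exact le_add_of_nonneg_right (inv_nonneg.2 (mul_pos ha hr').le)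
      _ = _ := by ring
  · have hsq : (k ^ 2)⁻¹ ≤ 2 * (1 + k ^ 2)⁻¹ := by
      rw [← div_eq_mul_inv, inv_le_iff_one_le_mul₀ (by positivity), div_mul_eq_mul_div,
        le_div_iff₀ (by positivity)]
      nlinarith
    calc k ^ p * |f (k * r)| * |g (k * r')| ≤ 1 * (C / (k * r)) * (D / (k * r')) := by
          gcongr
          exacts [zpow_le_one_of_nonpos₀ hk1 hp, (hf _ (by positivity)).2,
            (hg _ (by positivity)).2]
      _ = C * D * (r * r')⁻¹ * (k ^ 2)⁻¹ := by field_simp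
      _ ≤ C * D * (b ^ m * r' ^ m' + (a * r')⁻¹) * (2 * (1 + k ^ 2)⁻¹) := by
          gcongr
          exact (inv_anti₀ (mul_pos ha hr') (by gcongr)).trans
            (le_add_of_nonneg_left (mul_nonneg (pow_nonneg hb.le _) (pow_nonneg hr'.le _)))
      _ = _ := by ring

noncomputable def besselOverlap (ℓ ℓ' : ℕ) (p : ℤ) (r' r : ℝ) : ℝ :=
  ∫ k in Ioi 0, k ^ p * sphericalBessel ℓ (k * r) * sphericalBessel ℓ' (k * r')

section Overlap

variable {ℓ ℓ' : ℕ} {p : ℤ} {r r' : ℝ}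

lemma continuousOn_zpow_mul_sphericalBessel_mul (hr : 0 < r) (hr' : 0 < r') :
    ContinuousOn (fun k => k ^ p * sphericalBessel ℓ (k * r) * sphericalBessel ℓ' (k * r'))
      (Ioi 0) := by
  have hcomp : ∀ {n : ℕ} {s : ℝ}, 0 < s →
      ContinuousOn (fun k => sphericalBessel n (k * s)) (Ioi 0) := fun hs =>
    (continuousOn_sphericalBessel _).comp (continuousOn_id.mul continuousOn_const)
      fun k hk => mul_pos hk hs
  exact (((continuousOn_zpow₀ p).mono fun k hk => ne_of_gt hk).mul (hcomp hr)).mul (hcomp hr')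

lemma integrableOn_zpow_mul_sphericalBessel_mul (hp : p ≤ 0) (hpℓ : 0 ≤ p + ℓ + ℓ')
    (hr : 0 < r) (hr' : 0 < r') :
    IntegrableOn (fun k => k ^ p * sphericalBessel ℓ (k * r) * sphericalBessel ℓ' (k * r'))
      (Ioi 0) := by
  obtain ⟨C, hC⟩ := exists_abs_sphericalBessel_le_mul_pow_and_div ℓ
  obtain ⟨D, hD⟩ := exists_abs_sphericalBessel_le_mul_pow_and_div ℓ'
  refine Integrable.mono'
    (integrable_inv_one_add_sq.const_mul (2 * C * D * (r ^ ℓ * r' ^ ℓ' + (r * r')⁻¹))).integrableOn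
    ((continuousOn_zpow_mul_sphericalBessel_mul hr hr').aestronglyMeasurable measurableSet_Ioi)
    ((ae_restrict_iff' measurableSet_Ioi).2 (.of_forall fun k hk => ?_))
  exact abs_zpow_mul_mul_le_inv_one_add_sq hp hpℓ hC hD hr le_rfl le_rfl hr' hk

lemma hasDerivAt_zpow_mul_comp_mul {u w : ℝ → ℝ} {α β c k : ℝ} (p : ℤ) (hk : 0 < k)
    (hr : 0 < r) (hu : HasDerivAt u (α / (k * r) * u (k * r) + β * w (k * r)) (k * r)) :
    HasDerivAt (fun r => k ^ p * u (k * r) * c)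
      (α / r * (k ^ p * u (k * r) * c) + β * (k ^ (p + 1) * w (k * r) * c)) r := by
  refine (((hu.comp r ((hasDerivAt_id r).const_mul k)).const_mul (k ^ p)).mul_const c).congr_deriv
    ?_
  rw [zpow_add_one₀ hk.ne']
  field_simp

lemma hasDerivAt_besselOverlap {ℓ₂ : ℕ} {α β : ℝ}
    (hderiv : ∀ x, 0 < x →
      HasDerivAt (sphericalBessel ℓ) (α / x * sphericalBessel ℓ x + β * sphericalBessel ℓ₂ x) x)
    (hp : p + 1 ≤ 0) (hpℓ : 0 ≤ p + ℓ + ℓ') (hpℓ₂ : 0 ≤ p + 1 + ℓ₂ + ℓ') (hr : 0 < r)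
    (hr' : 0 < r') :
    HasDerivAt (besselOverlap ℓ ℓ' p r')
      (α / r * besselOverlap ℓ ℓ' p r' r + β * besselOverlap ℓ₂ ℓ' (p + 1) r' r) r := by
  obtain ⟨C, hC⟩ := exists_abs_sphericalBessel_le_mul_pow_and_div ℓ
  obtain ⟨C₂, hC₂⟩ := exists_abs_sphericalBessel_le_mul_pow_and_div ℓ₂
  obtain ⟨D, hD⟩ := exists_abs_sphericalBessel_le_mul_pow_and_div ℓ'
  set F : ℝ → ℝ → ℝ := fun x k =>
    k ^ p * sphericalBessel ℓ (k * x) * sphericalBessel ℓ' (k * r')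
  set G : ℝ → ℝ → ℝ := fun x k =>
    k ^ (p + 1) * sphericalBessel ℓ₂ (k * x) * sphericalBessel ℓ' (k * r')
  have hFint : IntegrableOn (F r) (Ioi 0) :=
    integrableOn_zpow_mul_sphericalBessel_mul (by omega) hpℓ hr hr'
  have hGint : IntegrableOn (G r) (Ioi 0) :=
    integrableOn_zpow_mul_sphericalBessel_mul hp hpℓ₂ hr hr'
  set M := 2 * C * D * ((2 * r) ^ ℓ * r' ^ ℓ' + (r / 2 * r')⁻¹)
  set M₂ := 2 * C₂ * D * ((2 * r) ^ ℓ₂ * r' ^ ℓ' + (r / 2 * r')⁻¹)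
  have hs : Ioo (r / 2) (2 * r) ∈ 𝓝 r := Ioo_mem_nhds (by linarith) (by linarith)
  have key := hasDerivAt_integral_of_dominated_loc_of_deriv_le (μ := volume.restrict (Ioi 0))
    (F := F) (F' := fun x k => α / x * F x k + β * G x k)
    (bound := fun k => (|α| * (2 / r) * M + |β| * M₂) * (1 + k ^ 2)⁻¹) hs
    (eventually_of_mem (Ioi_mem_nhds hr) fun x hx =>
      (continuousOn_zpow_mul_sphericalBessel_mul hx hr').aestronglyMeasurable measurableSet_Ioi)
    hFint ((hFint.const_mul _).add (hGint.const_mul _)).aestronglyMeasurable ?_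
    (integrable_inv_one_add_sq.const_mul _).integrableOn ?_
  · rw [integral_add (hFint.const_mul _) (hGint.const_mul _), integral_const_mul,
      integral_const_mul] at key
    exact key.2
  · refine (ae_restrict_iff' measurableSet_Ioi).2 (.of_forall fun k hk x hx => ?_)
    have hx0 : 0 < x := by linarith [hx.1]
    have hFx := abs_zpow_mul_mul_le_inv_one_add_sq (by omega) hpℓ hC hD (by linarith) hx.1.le
      hx.2.le hr' hk
    have hGx := abs_zpow_mul_mul_le_inv_one_add_sq hp hpℓ₂ hC₂ hD (by linarith) hx.1.le
      hx.2.le hr' hk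
    have hαx : |α / x| ≤ |α| * (2 / r) := by
      rw [abs_div, abs_of_pos hx0, div_eq_mul_inv]
      gcongr
      rw [inv_le_comm₀ hx0 (by positivity), inv_div]
      exact hx.1.le
    calc ‖α / x * F x k + β * G x k‖ ≤ |α / x| * |F x k| + |β| * |G x k| := by
          rw [Real.norm_eq_abs, ← abs_mul, ← abs_mul]
          exact abs_add_le _ _
      _ ≤ |α| * (2 / r) * (M * (1 + k ^ 2)⁻¹) + |β| * (M₂ * (1 + k ^ 2)⁻¹) := by
          gcongr
      _ = _ := by ring
  · refine (ae_restrict_iff' measurableSet_Ioi).2 (.of_forall fun k hk x hx => ?_)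
    have hx0 : 0 < x := by linarith [hx.1]
    exact hasDerivAt_zpow_mul_comp_mul p hk hx0 (hderiv _ (mul_pos hk hx0))

end Overlap

/-- For `n ≤ −2` with `ℓ + ℓ' + n + 1 > 0` and fixed `r' > 0`, the overlap integral
`I(r) = ∫₀^∞ k^n j_ℓ(kr) j_{ℓ'}(kr') dk` is twice differentiable on `(0,∞)` and applying
`D̂_{ℓ,r} = −[∂²/∂r² + (2/r)∂/∂r − ℓ(ℓ+1)/r²]` raises the power-law weight by two. -/
theorem doubleSBF_operator_raises_power (ℓ ℓ' : ℕ) (n : ℤ) (hn : n ≤ -2)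
    (hconv : 0 < (ℓ : ℤ) + ℓ' + n + 1) (r' : ℝ) (hr' : 0 < r') :
    (∀ r : ℝ, 0 < r →
        DifferentiableAt ℝ
          (fun r : ℝ => ∫ k in Set.Ioi (0 : ℝ),
            k ^ n * sphericalBessel ℓ (k * r) * sphericalBessel ℓ' (k * r')) r ∧
        DifferentiableAt ℝ
          (deriv (fun r : ℝ => ∫ k in Set.Ioi (0 : ℝ),
            k ^ n * sphericalBessel ℓ (k * r) * sphericalBessel ℓ' (k * r'))) r) ∧
      ∀ r : ℝ, 0 < r →
        -(deriv (deriv (fun r : ℝ => ∫ k in Set.Ioi (0 : ℝ),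
              k ^ n * sphericalBessel ℓ (k * r) * sphericalBessel ℓ' (k * r'))) r
            + (2 / r) * deriv (fun r : ℝ => ∫ k in Set.Ioi (0 : ℝ),
              k ^ n * sphericalBessel ℓ (k * r) * sphericalBessel ℓ' (k * r')) r
            - ((ℓ : ℝ) * ((ℓ : ℝ) + 1) / r ^ 2) * ∫ k in Set.Ioi (0 : ℝ),
              k ^ n * sphericalBessel ℓ (k * r) * sphericalBessel ℓ' (k * r'))
          = ∫ k in Set.Ioi (0 : ℝ),
              k ^ (n + 2) * sphericalBessel ℓ (k * r) * sphericalBessel ℓ' (k * r') := by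
  set I := besselOverlap ℓ ℓ' n r'
  set I₁ := besselOverlap (ℓ + 1) ℓ' (n + 1) r'
  set I₂ := besselOverlap ℓ ℓ' (n + 2) r'
  have hI : ∀ r, 0 < r → HasDerivAt I (ℓ / r * I r + -1 * I₁ r) r := fun r hr =>
    hasDerivAt_besselOverlap (ℓ₂ := ℓ + 1)
      (fun x hx => (hasDerivAt_sphericalBessel ℓ hx).congr_deriv (by ring))
      (by omega) (by omega) (by push_cast; omega) hr hr'
  have hI₁ : ∀ r, 0 < r → HasDerivAt I₁ (-(ℓ + 2) / r * I₁ r + 1 * I₂ r) r := fun r hr => by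
    have h := hasDerivAt_besselOverlap (ℓ' := ℓ') (p := n + 1) (ℓ₂ := ℓ) (α := -(ℓ + 2))
      (β := 1)
      (fun x hx => (hasDerivAt_sphericalBessel_succ ℓ hx).congr_deriv (by ring))
      (by omega) (by push_cast; omega) (by omega) hr hr'
    rwa [add_assoc n, one_add_one_eq_two] at h
  have hI' : ∀ r, 0 < r → HasDerivAt (deriv I) (ℓ * -(r ^ 2)⁻¹ * I r
      + ℓ * r⁻¹ * (ℓ / r * I r + -1 * I₁ r) + -1 * (-(ℓ + 2) / r * I₁ r + 1 * I₂ r)) r :=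
    fun r hr => ((((hasDerivAt_inv hr.ne').const_mul (ℓ : ℝ)).mul (hI r hr)).add
      ((hI₁ r hr).const_mul (-1))).congr_of_eventuallyEq
      (eventually_of_mem (Ioi_mem_nhds hr) fun x hx => by
        rw [(hI x hx).deriv, div_eq_mul_inv]
        rfl)
  refine ⟨fun r hr => ⟨(hI r hr).differentiableAt, (hI' r hr).differentiableAt⟩, fun r hr => ?_⟩
  show -(deriv (deriv I) r + 2 / r * deriv I r - ℓ * (ℓ + 1) / r ^ 2 * I r) = I₂ r
  rw [(hI' r hr).deriv, (hI r hr).deriv]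
  field_simp
  ring
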